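/- arXiv:2105.06819 — 3 statements merged into one kernel-verified Lean document; each statement's English description precedes it below -/
import Mathlib

section
/- Let G be a finite simple graph and k a positive integer. Then ε(S(G)_k) = √k · ε(S(G)), where ε denotes graph energy. -/
open Matrix

noncomputable section

/-- The multiplicity of `μ` as an eigenvalue of a real matrix `M`:
the dimension of the kernel of `M - μ·Id`. -/
def eigMult {n : Type} [Fintype n] [DecidableEq n] (M : Matrix n n ℝ) (μ : ℝ) : ℕ :=
  Module.finrank ℝ (LinearMap.ker (Matrix.toLin' (M - μ • (1 : Matrix n n ℝ))))

/-- The energy of a real symmetric matrix: the sum of the absolute values of its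
eigenvalues, counted with multiplicity. -/
def matEnergy {n : Type} [Fintype n] [DecidableEq n] (M : Matrix n n ℝ) : ℝ :=
  if h : M.IsHermitian then ∑ i, |h.eigenvalues i| else 0

/-- The incidence matrix of a graph, rows indexed by vertices, columns by edges. -/
def incid {V : Type} [DecidableEq V] (G : SimpleGraph V) : Matrix V G.edgeSet ℝ :=
  fun v e => if v ∈ (e : Sym2 V) then 1 else 0

/-- Adjacency matrix of the subdivision graph `S(G)`. -/
def AS {V : Type} [DecidableEq V] (G : SimpleGraph V) :
    Matrix (V ⊕ G.edgeSet) (V ⊕ G.edgeSet) ℝ :=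
  Matrix.fromBlocks 0 (incid G) (incid G)ᵀ 0

/-- Adjacency matrix of `S(G)_k`. -/
def ASk {V : Type} [DecidableEq V] (G : SimpleGraph V) (k : ℕ) :
    Matrix (V ⊕ (Fin k × G.edgeSet)) (V ⊕ (Fin k × G.edgeSet)) ℝ :=
  fun x y => match x, y with
    | Sum.inl v, Sum.inr (_, e) => if v ∈ (e : Sym2 V) then 1 else 0
    | Sum.inr (_, e), Sum.inl v => if v ∈ (e : Sym2 V) then 1 else 0
    | _, _ => 0

/-- Adjacency matrix of `S(G)_t^n`. -/
def AStn {V : Type} [DecidableEq V] (G : SimpleGraph V) (n t : ℕ) :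
    Matrix ((Fin (n + 1) × V) ⊕ (Fin (t + 1) × G.edgeSet))
           ((Fin (n + 1) × V) ⊕ (Fin (t + 1) × G.edgeSet)) ℝ :=
  fun x y => match x, y with
    | Sum.inl (_, v), Sum.inr (_, e) => if v ∈ (e : Sym2 V) then 1 else 0
    | Sum.inr (_, e), Sum.inl (_, v) => if v ∈ (e : Sym2 V) then 1 else 0
    | _, _ => 0

/-- The subdivision graph `S(G)` as a simple graph. -/
def SGGraph {V : Type} (G : SimpleGraph V) : SimpleGraph (V ⊕ G.edgeSet) where
  Adj x y :=
    (∃ (v : V) (e : G.edgeSet), x = Sum.inl v ∧ y = Sum.inr e ∧ v ∈ (e : Sym2 V)) ∨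
    (∃ (v : V) (e : G.edgeSet), x = Sum.inr e ∧ y = Sum.inl v ∧ v ∈ (e : Sym2 V))
  symm := by
    constructor
    rintro x y (⟨v, e, rfl, rfl, h⟩ | ⟨v, e, rfl, rfl, h⟩)
    · exact Or.inr ⟨v, e, rfl, rfl, h⟩
    · exact Or.inl ⟨v, e, rfl, rfl, h⟩
  loopless := by
    constructor
    rintro x (⟨v, e, h1, h2, _⟩ | ⟨v, e, h1, h2, _⟩) <;> subst h1 <;> simp_all

/-- The graph `S(G)_k`. -/
def SGkGraph {V : Type} (G : SimpleGraph V) (k : ℕ) :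
    SimpleGraph (V ⊕ (Fin k × G.edgeSet)) where
  Adj x y :=
    (∃ (v : V) (ie : Fin k × G.edgeSet),
        x = Sum.inl v ∧ y = Sum.inr ie ∧ v ∈ (ie.2 : Sym2 V)) ∨
    (∃ (v : V) (ie : Fin k × G.edgeSet),
        x = Sum.inr ie ∧ y = Sum.inl v ∧ v ∈ (ie.2 : Sym2 V))
  symm := by
    constructor
    rintro x y (⟨v, ie, rfl, rfl, h⟩ | ⟨v, ie, rfl, rfl, h⟩)
    · exact Or.inr ⟨v, ie, rfl, rfl, h⟩
    · exact Or.inl ⟨v, ie, rfl, rfl, h⟩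
  loopless := by
    constructor
    rintro x (⟨v, ie, h1, h2, _⟩ | ⟨v, ie, h1, h2, _⟩) <;> subst h1 <;> simp_all

/-- The graph `S(G)_t^n`. -/
def SGtnGraph {V : Type} (G : SimpleGraph V) (n t : ℕ) :
    SimpleGraph ((Fin (n + 1) × V) ⊕ (Fin (t + 1) × G.edgeSet)) where
  Adj x y :=
    (∃ (iv : Fin (n + 1) × V) (je : Fin (t + 1) × G.edgeSet),
        x = Sum.inl iv ∧ y = Sum.inr je ∧ iv.2 ∈ (je.2 : Sym2 V)) ∨
    (∃ (iv : Fin (n + 1) × V) (je : Fin (t + 1) × G.edgeSet),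
        x = Sum.inr je ∧ y = Sum.inl iv ∧ iv.2 ∈ (je.2 : Sym2 V))
  symm := by
    constructor
    rintro x y (⟨iv, je, rfl, rfl, h⟩ | ⟨iv, je, rfl, rfl, h⟩)
    · exact Or.inr ⟨iv, je, rfl, rfl, h⟩
    · exact Or.inl ⟨iv, je, rfl, rfl, h⟩
  loopless := by
    constructor
    rintro x (⟨iv, je, h1, h2, _⟩ | ⟨iv, je, h1, h2, _⟩) <;> subst h1 <;> simp_all

open scoped Classical in
/-- The Randić matrix of a graph: entry `1/√(deg u · deg v)` when `u ~ v`, else `0`. -/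
def randicMatrix {W : Type} (H : SimpleGraph W) : Matrix W W ℝ :=
  fun u v =>
    if H.Adj u v then
      1 / Real.sqrt ((Nat.card (H.neighborSet u) * Nat.card (H.neighborSet v) : ℕ) : ℝ)
    else 0

/-- `H` has no isolated vertices. -/
def NoIsolated {W : Type} (H : SimpleGraph W) : Prop := ∀ v, ∃ u, H.Adj v u

/-- The matrix `B` used in the construction of `F₁^m(G)`: all entries `1`
except `B(1,1) = 0` and `B(i, m+1-i) = 0` for `2 ≤ i ≤ m-1` (1-based indexing). -/
def Bmat (m : ℕ) : Matrix (Fin m) (Fin m) ℝ :=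
  fun i j =>
    if (i.val = 0 ∧ j.val = 0) ∨ (i.val ≠ 0 ∧ j.val ≠ 0 ∧ i.val + j.val = m - 1) then 0 else 1

lemma Bmat_symm (m : ℕ) (i j : Fin m) : Bmat m i j = Bmat m j i := by
  unfold Bmat
  by_cases h : (i.val = 0 ∧ j.val = 0) ∨ (i.val ≠ 0 ∧ j.val ≠ 0 ∧ i.val + j.val = m - 1)
  · rw [if_pos h, if_pos (by omega)]
  · rw [if_neg h, if_neg (by omega)]

/-- The graph `F₁^m(G)`: `(i,u) ~ (j,v)` iff `B(i,j) = 1` and `u ~ v` in `G`. -/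
def F1Graph {V : Type} (m : ℕ) (G : SimpleGraph V) : SimpleGraph (Fin m × V) where
  Adj x y := Bmat m x.1 y.1 = 1 ∧ G.Adj x.2 y.2
  symm := by
    constructor
    rintro x y ⟨hb, ha⟩
    refine ⟨?_, ha.symm⟩
    rw [Bmat_symm]; exact hb
  loopless := ⟨fun x h => G.loopless.irrefl x.2 h.2⟩

/-- The matrix `H` used in the construction of `F₂^m(G)`: all entries `1`
except `H(i,i) = 0` for `2 ≤ i ≤ m` (1-based indexing). -/
def HmatF2 (m : ℕ) : Matrix (Fin m) (Fin m) ℝ :=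
  fun i j => if i.val = j.val ∧ i.val ≠ 0 then 0 else 1

lemma HmatF2_symm (m : ℕ) (i j : Fin m) : HmatF2 m i j = HmatF2 m j i := by
  unfold HmatF2
  by_cases h : i.val = j.val ∧ i.val ≠ 0
  · rw [if_pos h, if_pos (by omega)]
  · rw [if_neg h, if_neg (by omega)]

/-- The graph `F₂^m(G)`: `(i,u) ~ (j,v)` iff `H(i,j) = 1` and `u ~ v` in `G`. -/
def F2Graph {V : Type} (m : ℕ) (G : SimpleGraph V) : SimpleGraph (Fin m × V) where
  Adj x y := HmatF2 m x.1 y.1 = 1 ∧ G.Adj x.2 y.2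
  symm := by
    constructor
    rintro x y ⟨hb, ha⟩
    refine ⟨?_, ha.symm⟩
    rw [HmatF2_symm]; exact hb
  loopless := ⟨fun x h => G.loopless.irrefl x.2 h.2⟩

/-- The tensor (Kronecker) product of simple graphs. -/
def tensorGraph {W U : Type} (H : SimpleGraph W) (G : SimpleGraph U) :
    SimpleGraph (W × U) where
  Adj x y := H.Adj x.1 y.1 ∧ G.Adj x.2 y.2
  symm := ⟨fun _ _ h => ⟨h.1.symm, h.2.symm⟩⟩
  loopless := ⟨fun x h => H.loopless.irrefl x.1 h.1⟩

section SqrtCompat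

open scoped MatrixOrder

variable {n : Type} [Fintype n] [DecidableEq n]

/-- square root of a positive semidefinite matrix -/
def Matrix.PosSemidef.sqrt {A : Matrix n n ℝ} (_ : A.PosSemidef) : Matrix n n ℝ := CFC.sqrt A

lemma Matrix.PosSemidef.posSemidef_sqrt {A : Matrix n n ℝ} (hA : A.PosSemidef) :
    hA.sqrt.PosSemidef := (CFC.sqrt_nonneg A).posSemidef

lemma Matrix.PosSemidef.sqrt_mul_self {A : Matrix n n ℝ} (hA : A.PosSemidef) :
    hA.sqrt * hA.sqrt = A := CFC.sqrt_mul_sqrt_self A hA.nonneg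

lemma Matrix.PosSemidef.sq_sqrt {A : Matrix n n ℝ} (hA : A.PosSemidef) :
    hA.sqrt ^ 2 = A := by rw [pow_two]; exact hA.sqrt_mul_self

lemma Matrix.PosSemidef.eq_sqrt_of_sq_eq {A : Matrix n n ℝ} (hA : A.PosSemidef)
    {B : Matrix n n ℝ} (hB : B.PosSemidef) (hAB : A ^ 2 = B) : A = hB.sqrt :=
  (CFC.sqrt_unique (a := B) (b := A) (by rw [← pow_two]; exact hAB) hA.nonneg).symm

end SqrtCompat

section Aux

variable {n : Type} [Fintype n] [DecidableEq n]

lemma sqrt_congr_aux {A B : Matrix n n ℝ} (h : A = B) (hA : A.PosSemidef) (hB : B.PosSemidef) :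
    hA.sqrt = hB.sqrt := by subst h; rfl

lemma trace_fromBlocks_aux {m : Type} [Fintype m] (A : Matrix n n ℝ) (B : Matrix n m ℝ)
    (C : Matrix m n ℝ) (D : Matrix m m ℝ) :
    (fromBlocks A B C D).trace = A.trace + D.trace := by
  simp [Matrix.trace, Fintype.sum_sum_type, fromBlocks, Matrix.diag]

lemma psd_fromBlocks_aux {m : Type} [Fintype m] [DecidableEq m] {P : Matrix n n ℝ}
    {Q : Matrix m m ℝ} (hP : P.PosSemidef) (hQ : Q.PosSemidef) :
    (fromBlocks P 0 0 Q).PosSemidef := by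
  rw [posSemidef_iff_dotProduct_mulVec]
  constructor
  · rw [IsHermitian, fromBlocks_conjTranspose, hP.1, hQ.1]
    simp
  · intro x
    have h1 := hP.dotProduct_mulVec_nonneg (x ∘ Sum.inl)
    have h2 := hQ.dotProduct_mulVec_nonneg (x ∘ Sum.inr)
    simpa [fromBlocks_mulVec, dotProduct, Fintype.sum_sum_type] using add_nonneg h1 h2

lemma sqrt_fromBlocks_aux {m : Type} [Fintype m] [DecidableEq m] {P : Matrix n n ℝ}
    {Q : Matrix m m ℝ} (hP : P.PosSemidef) (hQ : Q.PosSemidef)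
    (hPQ : (fromBlocks P 0 0 Q).PosSemidef) :
    hPQ.sqrt = fromBlocks hP.sqrt 0 0 hQ.sqrt := by
  symm
  apply Matrix.PosSemidef.eq_sqrt_of_sq_eq (psd_fromBlocks_aux hP.posSemidef_sqrt hQ.posSemidef_sqrt)
  rw [pow_two, fromBlocks_multiply]
  simp [hP.sqrt_mul_self, hQ.sqrt_mul_self]

lemma psd_smul_aux {c : ℝ} (hc : 0 ≤ c) {P : Matrix n n ℝ} (hP : P.PosSemidef) :
    (c • P).PosSemidef := by
  rw [posSemidef_iff_dotProduct_mulVec]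
  constructor
  · rw [IsHermitian, conjTranspose_smul, hP.1]
    simp
  · intro x
    have := hP.dotProduct_mulVec_nonneg x
    simp only [smul_mulVec, dotProduct_smul, smul_eq_mul]
    positivity

lemma sqrt_smul_aux {c : ℝ} (hc : 0 ≤ c) {P : Matrix n n ℝ} (hP : P.PosSemidef)
    (hcP : (c • P).PosSemidef) : hcP.sqrt = Real.sqrt c • hP.sqrt := by
  symm
  apply Matrix.PosSemidef.eq_sqrt_of_sq_eq (psd_smul_aux (Real.sqrt_nonneg c) hP.posSemidef_sqrt)
  rw [smul_pow, hP.sq_sqrt, Real.sq_sqrt hc]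

end Aux

/-- blow-up of a matrix -/
def blowup {E : Type} (k : ℕ) (N : Matrix E E ℝ) : Matrix (Fin k × E) (Fin k × E) ℝ :=
  fun p q => N p.2 q.2

section Blow

variable {E : Type} [Fintype E] [DecidableEq E] (k : ℕ)

lemma blowup_mul (M N : Matrix E E ℝ) :
    blowup k M * blowup k N = (k : ℝ) • blowup k (M * N) := by
  ext p q
  simp [blowup, Matrix.mul_apply, Fintype.sum_prod_type, Finset.mul_sum, Matrix.smul_apply]

lemma blowup_trace (N : Matrix E E ℝ) : (blowup k N).trace = (k : ℝ) * N.trace := by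
  simp [blowup, Matrix.trace, Fintype.sum_prod_type, Matrix.diag, Finset.mul_sum]

lemma blowup_psd {N : Matrix E E ℝ} (hN : N.PosSemidef) : (blowup k N).PosSemidef := by
  set C : Matrix E (Fin k × E) ℝ := Matrix.of fun e p => if e = p.2 then (1:ℝ) else 0 with hC
  have key : blowup k N = Cᴴ * N * C := by
    ext p q
    simp only [blowup, Matrix.mul_apply, conjTranspose_apply, hC, Matrix.of_apply, star_trivial,
      ite_mul, one_mul, zero_mul, mul_ite, mul_one, mul_zero, Finset.sum_ite_eq,
      Finset.mem_univ, if_true]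
    simp
  rw [key]
  exact hN.conjTranspose_mul_mul_same _

end Blow

lemma sqrt_blowup_aux {E : Type} [Fintype E] [DecidableEq E] {k : ℕ} (hk : 0 < k)
    {N : Matrix E E ℝ} (hN : N.PosSemidef) (hbN : (blowup k N).PosSemidef) :
    hbN.sqrt = (Real.sqrt k)⁻¹ • blowup k hN.sqrt := by
  have hk' : (0:ℝ) < k := by exact_mod_cast hk
  symm
  apply Matrix.PosSemidef.eq_sqrt_of_sq_eq
    (psd_smul_aux (by positivity) (blowup_psd k hN.posSemidef_sqrt))
  rw [smul_pow, pow_two (blowup k hN.sqrt), blowup_mul, hN.sqrt_mul_self, smul_smul]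
  have h1 : ((Real.sqrt k)⁻¹) ^ 2 * (k : ℝ) = 1 := by
    rw [inv_pow, Real.sq_sqrt hk'.le]
    field_simp
  rw [h1, one_smul]

lemma energy_eq_trace_sqrt {n : Type} [Fintype n] [DecidableEq n] {M : Matrix n n ℝ}
    (hM : M.IsHermitian) (h2 : (M ^ 2).PosSemidef) : matEnergy M = h2.sqrt.trace := by
  set U : Matrix n n ℝ := (hM.eigenvectorUnitary : Matrix n n ℝ) with hUdef
  have hUU : star U * U = 1 := Unitary.coe_star_mul_self hM.eigenvectorUnitary
  set D : Matrix n n ℝ := diagonal (fun i => |hM.eigenvalues i|) with hD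
  set E : Matrix n n ℝ := diagonal (RCLike.ofReal ∘ hM.eigenvalues) with hE
  have hMspec : M = U * E * star U := hM.spectral_theorem
  have hconj : ∀ A B : Matrix n n ℝ, (U * A * star U) * (U * B * star U) = U * (A * B) * star U := by
    intro A B
    simp only [mul_assoc]
    rw [← mul_assoc (star U) U, hUU, one_mul]
  have hSpsd : (U * D * star U).PosSemidef := by
    have : D.PosSemidef := PosSemidef.diagonal (fun i => abs_nonneg _)
    simpa [Matrix.star_eq_conjTranspose] using this.mul_mul_conjTranspose_same U
  have hDD : D * D = E * E := by
    rw [hD, hE, diagonal_mul_diagonal, diagonal_mul_diagonal]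
    congr 1
    funext i
    simp [abs_mul_abs_self]
  have hsq : (U * D * star U) ^ 2 = M ^ 2 := by
    rw [pow_two, pow_two, hconj, hMspec, hconj, hDD]
  have hkey : U * D * star U = h2.sqrt := hSpsd.eq_sqrt_of_sq_eq h2 hsq
  rw [matEnergy, dif_pos hM, ← hkey, trace_mul_cycle, hUU, one_mul, hD, trace_diagonal]

/-- `ε(S(G)_k) = √k · ε(S(G))`. -/
theorem stmt_1 (V : Type) [Fintype V] [DecidableEq V] (G : SimpleGraph V) [DecidableRel G.Adj]
    (k : ℕ) (hk : 0 < k) :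
    matEnergy (ASk G k) = Real.sqrt (k : ℝ) * matEnergy (AS G) := by
  classical
  set B : Matrix V G.edgeSet ℝ := incid G with hBdef
  have hBc : Bᴴ = Bᵀ := conjTranspose_eq_transpose_of_trivial B
  -- Hermitian-ness and PSD facts
  have hASh : (AS G).IsHermitian := by
    unfold Matrix.IsHermitian AS
    rw [fromBlocks_conjTranspose]
    simp [conjTranspose_eq_transpose_of_trivial]
  have hP : (B * Bᵀ).PosSemidef := by
    have := posSemidef_self_mul_conjTranspose B
    rwa [hBc] at this
  have hQ : (Bᵀ * B).PosSemidef := by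
    have := posSemidef_conjTranspose_mul_self B
    rwa [hBc] at this
  have h2AS : ((AS G) ^ 2).PosSemidef := by
    have h := posSemidef_conjTranspose_mul_self (AS G)
    rwa [hASh, ← pow_two] at h
  have hASsq : (AS G) ^ 2 = fromBlocks (B * Bᵀ) 0 0 (Bᵀ * B) := by
    rw [pow_two]
    unfold AS
    rw [fromBlocks_multiply]
    simp [hBdef]
  have hPQ : (fromBlocks (B * Bᵀ) 0 0 (Bᵀ * B)).PosSemidef := psd_fromBlocks_aux hP hQ
  have energyAS : matEnergy (AS G) = hP.sqrt.trace + hQ.sqrt.trace := by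
    rw [energy_eq_trace_sqrt hASh h2AS, sqrt_congr_aux hASsq h2AS hPQ,
      sqrt_fromBlocks_aux hP hQ hPQ, trace_fromBlocks_aux]
  -- the k-fold side
  set Bk : Matrix V (Fin k × G.edgeSet) ℝ := Matrix.of (fun v p => B v p.2) with hBkdef
  have hASk_eq : ASk G k = fromBlocks 0 Bk Bkᵀ 0 := by
    ext x y
    rcases x with v | ⟨i, e⟩ <;> rcases y with w | ⟨j, f⟩ <;>
      simp [ASk, fromBlocks, hBkdef, hBdef, incid]
  have hASkh : (ASk G k).IsHermitian := by
    rw [hASk_eq]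
    unfold Matrix.IsHermitian
    rw [fromBlocks_conjTranspose]
    simp [conjTranspose_eq_transpose_of_trivial]
  have h2ASk : ((ASk G k) ^ 2).PosSemidef := by
    have h := posSemidef_conjTranspose_mul_self (ASk G k)
    rwa [hASkh, ← pow_two] at h
  have hBk1 : Bk * Bkᵀ = (k : ℝ) • (B * Bᵀ) := by
    ext v w
    simp [hBkdef, Matrix.mul_apply, Fintype.sum_prod_type, Matrix.smul_apply, Finset.mul_sum]
  have hBk2 : Bkᵀ * Bk = blowup k (Bᵀ * B) := by
    ext p q
    simp [hBkdef, blowup, Matrix.mul_apply]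
  have hASksq : (ASk G k) ^ 2 = fromBlocks ((k : ℝ) • (B * Bᵀ)) 0 0 (blowup k (Bᵀ * B)) := by
    rw [hASk_eq, pow_two, fromBlocks_multiply, hBk1, hBk2]
    simp
  have hkP : ((k : ℝ) • (B * Bᵀ)).PosSemidef := psd_smul_aux (by positivity) hP
  have hbQ : (blowup k (Bᵀ * B)).PosSemidef := blowup_psd k hQ
  have hPQk : (fromBlocks ((k : ℝ) • (B * Bᵀ)) 0 0 (blowup k (Bᵀ * B))).PosSemidef :=
    psd_fromBlocks_aux hkP hbQ
  have hk' : (0:ℝ) < k := by exact_mod_cast hk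
  have hsk : (0:ℝ) < Real.sqrt k := Real.sqrt_pos.mpr hk'
  have energyASk : matEnergy (ASk G k) =
      Real.sqrt k * hP.sqrt.trace + Real.sqrt k * hQ.sqrt.trace := by
    rw [energy_eq_trace_sqrt hASkh h2ASk, sqrt_congr_aux hASksq h2ASk hPQk,
      sqrt_fromBlocks_aux hkP hbQ hPQk, trace_fromBlocks_aux,
      sqrt_smul_aux (by positivity : (0:ℝ) ≤ (k:ℝ)) hP hkP,
      sqrt_blowup_aux hk hQ hbQ, trace_smul, trace_smul, blowup_trace]
    have h1 : (Real.sqrt k)⁻¹ * (k : ℝ) = Real.sqrt k := by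
      rw [← Real.mul_self_sqrt hk'.le]
      field_simp
      rw [Real.sqrt_sq hsk.le]
    simp only [smul_eq_mul]
    rw [show (Real.sqrt k)⁻¹ * ((k : ℝ) * hQ.sqrt.trace) =
        ((Real.sqrt k)⁻¹ * (k : ℝ)) * hQ.sqrt.trace by ring, h1]
  rw [energyASk, energyAS]
  ring

end
end

section
/- Let G be a finite simple graph such that every eigenvalue of the adjacency matrix of S(G) is an integer, and let k be a positive perfect square (k = s² for a positive integer s). Then every eigenvalue of the adjacency matrix of S(G)_k is an integer. -/
open Matrix

noncomputable section

/-- if every eigenvalue of `A(S(G))` is an integer and `k = s²` is a positive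
perfect square, then every eigenvalue of `A(S(G)_k)` is an integer. -/
theorem stmt_3 (V : Type) [Fintype V] [DecidableEq V] (G : SimpleGraph V) [DecidableRel G.Adj]
    (hint : ∀ μ : ℝ, 0 < eigMult (AS G) μ → ∃ z : ℤ, μ = (z : ℝ))
    (k s : ℕ) (hs : 0 < s) (hks : k = s ^ 2) :
    ∀ μ : ℝ, 0 < eigMult (ASk G k) μ → ∃ z : ℤ, μ = (z : ℝ) := by
  intro μ hμ
  by_cases hμ0 : μ = 0
  · exact ⟨0, by simp [hμ0]⟩
  have hk : 0 < k := by subst hks; positivity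
  have hsR : (s : ℝ) ≠ 0 := by positivity
  -- extract an eigenvector of ASk
  have hne : LinearMap.ker (Matrix.toLin' (ASk G k - μ • (1 : Matrix _ _ ℝ))) ≠ ⊥ := by
    intro h
    rw [eigMult, h, finrank_bot] at hμ
    exact lt_irrefl 0 hμ
  obtain ⟨x, hxk, hx0⟩ := (Submodule.ne_bot_iff _).mp hne
  have hx : (ASk G k).mulVec x = μ • x := by
    have := hxk
    rw [LinearMap.mem_ker, Matrix.toLin'_apply, Matrix.sub_mulVec,
      Matrix.smul_mulVec, Matrix.one_mulVec, sub_eq_zero] at this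
    exact this
  have he : ∀ (i : Fin k) (e : G.edgeSet),
      (∑ v, (if v ∈ (e : Sym2 V) then (1:ℝ) else 0) * x (Sum.inl v))
        = μ * x (Sum.inr (i, e)) := by
    intro i e
    have := congrFun hx (Sum.inr (i, e))
    simpa [Matrix.mulVec, dotProduct, Fintype.sum_sum_type, ASk] using this
  have hv : ∀ v : V,
      (∑ p : Fin k × G.edgeSet,
        (if v ∈ (p.2 : Sym2 V) then (1:ℝ) else 0) * x (Sum.inr p))
        = μ * x (Sum.inl v) := by
    intro v
    have := congrFun hx (Sum.inl v)
    simpa [Matrix.mulVec, dotProduct, Fintype.sum_sum_type, ASk] using this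
  have wconst : ∀ (i : Fin k) (e : G.edgeSet),
      x (Sum.inr (i, e)) = x (Sum.inr (⟨0, hk⟩, e)) := by
    intro i e
    apply mul_left_cancel₀ hμ0
    rw [← he i e, he ⟨0, hk⟩ e]
  -- the candidate eigenvector of AS
  set y : V ⊕ G.edgeSet → ℝ :=
    Sum.elim (fun v => x (Sum.inl v)) (fun e => s * x (Sum.inr (⟨0, hk⟩, e))) with hy_def
  have hy : (AS G).mulVec y = (μ / s) • y := by
    funext z
    cases z with
    | inl v =>
      have hsum : ∑ p : Fin k × G.edgeSet,
          (if v ∈ (p.2 : Sym2 V) then (1:ℝ) else 0) * x (Sum.inr p)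
          = (k : ℝ) * ∑ e : G.edgeSet,
              (if v ∈ (e : Sym2 V) then (1:ℝ) else 0) * x (Sum.inr (⟨0, hk⟩, e)) := by
        rw [Fintype.sum_prod_type]
        rw [Finset.sum_congr rfl (fun i _ => Finset.sum_congr rfl
          (fun e _ => by rw [wconst i e]))]
        simp [Finset.sum_const, Finset.card_univ, mul_comm]
      have hS : (k : ℝ) * ∑ e : G.edgeSet,
          (if v ∈ (e : Sym2 V) then (1:ℝ) else 0) * x (Sum.inr (⟨0, hk⟩, e))
          = μ * x (Sum.inl v) := by rw [← hsum, hv v]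
      have lhs : (AS G).mulVec y (Sum.inl v)
          = ∑ e : G.edgeSet,
              (if v ∈ (e : Sym2 V) then (1:ℝ) else 0)
                * (s * x (Sum.inr (⟨0, hk⟩, e))) := by
        simp [Matrix.mulVec, dotProduct, Fintype.sum_sum_type, AS, incid,
          Matrix.fromBlocks, hy_def]
      rw [lhs]
      have : ∑ e : G.edgeSet,
          (if v ∈ (e : Sym2 V) then (1:ℝ) else 0) * (s * x (Sum.inr (⟨0, hk⟩, e)))
          = s * ∑ e : G.edgeSet,
              (if v ∈ (e : Sym2 V) then (1:ℝ) else 0) * x (Sum.inr (⟨0, hk⟩, e)) := by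
        rw [Finset.mul_sum]; exact Finset.sum_congr rfl (fun e _ => by ring
          )
      rw [this]
      have hkR : (k : ℝ) = (s : ℝ) ^ 2 := by subst hks; push_cast; ring
      rw [hkR] at hS
      show _ = (μ / s) * x (Sum.inl v)
      field_simp at hS ⊢
      nlinarith [hS]
    | inr e =>
      have lhs : (AS G).mulVec y (Sum.inr e)
          = ∑ v : V, (if v ∈ (e : Sym2 V) then (1:ℝ) else 0) * x (Sum.inl v) := by
        simp [Matrix.mulVec, dotProduct, Fintype.sum_sum_type, AS, incid,
          Matrix.fromBlocks, Matrix.transpose, hy_def]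
      rw [lhs, he ⟨0, hk⟩ e]
      show μ * x (Sum.inr (⟨0, hk⟩, e)) = (μ / s) * (s * x (Sum.inr (⟨0, hk⟩, e)))
      field_simp
  have hy0 : y ≠ 0 := by
    intro h
    apply hx0
    have hu : ∀ v : V, x (Sum.inl v) = 0 := by
      intro v
      have := congrFun h (Sum.inl v)
      simpa [hy_def] using this
    have hw : ∀ p : Fin k × G.edgeSet, x (Sum.inr p) = 0 := by
      rintro ⟨i, e⟩
      have h1 := he i e
      simp only [hu, mul_zero, Finset.sum_const_zero] at h1
      exact (mul_eq_zero.mp h1.symm).resolve_left hμ0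
    funext z
    cases z with
    | inl v => exact hu v
    | inr p => exact hw p
  have hmem : y ∈ LinearMap.ker (Matrix.toLin' (AS G - (μ / s) • (1 : Matrix _ _ ℝ))) := by
    rw [LinearMap.mem_ker, Matrix.toLin'_apply, Matrix.sub_mulVec,
      Matrix.smul_mulVec, Matrix.one_mulVec, hy, sub_self]
  have hpos : 0 < eigMult (AS G) (μ / s) := by
    rw [eigMult]
    rw [Module.finrank_pos_iff]
    exact ⟨⟨y, hmem⟩, 0, by simpa [Subtype.ext_iff] using hy0⟩
  obtain ⟨z, hz⟩ := hint (μ / s) hpos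
  refine ⟨z * s, ?_⟩
  rw [div_eq_iff hsR] at hz
  push_cast
  linarith [hz]

end
end

section
/- Let G be a finite simple graph with p vertices and q edges and no isolated vertices, let n ≥ 1 be an integer, let t = n or t = n − 1, and let k be a positive integer with k·q = n·p + (t+1)·q (equivalently, k = n·p/q + t + 1, so that S(G)_k and S(G)_t^n have the same number of vertices). Then the Randić matrices R(S(G)_k) and R(S(G)_t^n) have the same characteristic polynomial; that is, S(G)_k and S(G)_t^n are Randić cospectral. -/
open Matrix

noncomputable section

open Polynomial in
lemma lemA {α β : Type} [Fintype α] [Fintype β] [DecidableEq α] [DecidableEq β]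
    (B : Matrix α β ℝ) :
    (Matrix.fromBlocks 0 B Bᵀ 0).charpoly * X ^ (Fintype.card α) =
      X ^ (Fintype.card β) *
        (((X : ℝ[X]) ^ 2 • (1 : Matrix α α ℝ[X])) - (B * Bᵀ).map C).det := by
  classical
  set P : Matrix α β ℝ[X] := B.map C with hP
  have hchar : charmatrix (Matrix.fromBlocks 0 B Bᵀ 0) =
      Matrix.fromBlocks ((X : ℝ[X]) • 1) (-P) (-Pᵀ) ((X : ℝ[X]) • 1) := by
    ext i j
    rcases i with i | i <;> rcases j with j | j <;>
      simp [charmatrix_apply, Matrix.diagonal_apply, Matrix.one_apply, Matrix.smul_apply,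
        hP, Matrix.map_apply, apply_ite, Matrix.transpose_apply]
  have hmul : Matrix.fromBlocks ((X:ℝ[X]) • (1 : Matrix α α ℝ[X])) (-P) (-Pᵀ)
        ((X:ℝ[X]) • (1 : Matrix β β ℝ[X])) *
      Matrix.fromBlocks ((X:ℝ[X]) • 1) 0 Pᵀ 1 =
      Matrix.fromBlocks ((X:ℝ[X]) ^ 2 • 1 - P * Pᵀ) (-P) 0 ((X:ℝ[X]) • 1) := by
    simp only [Matrix.fromBlocks_multiply, Matrix.mul_zero, Matrix.mul_one, Matrix.neg_mul,
      Matrix.smul_mul, Matrix.mul_smul, Matrix.one_mul, smul_smul, zero_add, add_zero, ← sq,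
      smul_neg, neg_add_cancel, sub_eq_add_neg, _root_.smul_pow, one_pow]
  have hdet := congrArg Matrix.det hmul
  simp only [Matrix.det_mul, Matrix.det_fromBlocks_zero₁₂, Matrix.det_fromBlocks_zero₂₁,
    Matrix.det_smul, Matrix.det_one, mul_one] at hdet
  have hmap : (B * Bᵀ).map C = P * Pᵀ := by
    rw [hP, Matrix.map_mul]
    congr 1
  rw [Matrix.charpoly, hchar, hmap, hdet, mul_comm]

open Polynomial in
lemma rowsum_Q (n : ℕ) (i : Fin (n + 1)) :
    ∑ a : Fin (n + 1), (fun i j => if i = 0 then (1:ℝ) else if j = i then 1 else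
      if j = 0 then -1 else 0) i a = if i = 0 then ((n:ℝ)+1) else 0 := by
  by_cases hi : i = 0
  · simp [hi]
  · rw [if_neg hi]
    have h : ∀ a : Fin (n+1), (if i = 0 then (1:ℝ) else if a = i then 1 else
        if a = 0 then -1 else 0) = (if a = i then (1:ℝ) else 0) - (if a = 0 then 1 else 0) := by
      intro a
      rw [if_neg hi]
      by_cases h1 : a = i
      · subst h1; rw [if_pos rfl, if_pos rfl, if_neg hi]; ring
      · rw [if_neg h1, if_neg h1]
        by_cases h2 : a = 0 <;> simp [h2]
    simp only [h, Finset.sum_sub_distrib, Finset.sum_ite_eq' Finset.univ,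
      Finset.mem_univ, if_pos]
    ring

lemma detQ_ne (n : ℕ) :
    (Matrix.det (fun i j => if i = 0 then (1:ℝ) else if j = i then 1 else
      if j = 0 then -1 else 0 : Matrix (Fin (n+1)) (Fin (n+1)) ℝ)) ≠ 0 := by
  set Q : Matrix (Fin (n+1)) (Fin (n+1)) ℝ := fun i j => if i = 0 then (1:ℝ) else
    if j = i then 1 else if j = 0 then -1 else 0 with hQ
  intro hdet
  obtain ⟨x, hx0, hx⟩ := (Matrix.exists_mulVec_eq_zero_iff).2 hdet
  have hrow : ∀ i, ∑ a, Q i a * x a = 0 := fun i => congrFun hx i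
  have hEq : ∀ a : Fin (n+1), x a = x 0 := by
    intro a
    by_cases ha : a = 0
    · rw [ha]
    · have := hrow a
      have h : ∀ b : Fin (n+1), Q a b * x b =
          (if b = a then (1:ℝ) else 0) * x b - (if b = 0 then 1 else 0) * x b := by
        intro b
        rw [hQ]
        simp only
        rw [if_neg ha]
        by_cases h1 : b = a
        · subst h1; rw [if_pos rfl, if_pos rfl, if_neg ha]; ring
        · rw [if_neg h1, if_neg h1]
          by_cases h2 : b = 0 <;> simp [h2]
      rw [Finset.sum_congr rfl (fun b _ => h b), Finset.sum_sub_distrib] at this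
      simp only [ite_mul, one_mul, zero_mul, Finset.sum_ite_eq' Finset.univ,
        Finset.mem_univ, if_pos] at this
      linarith [this]
  have hsum := hrow 0
  have h0 : ∀ b : Fin (n+1), Q 0 b * x b = x 0 := by
    intro b
    have hq : Q 0 b = 1 := by simp [hQ]
    rw [hq, one_mul, hEq b]
  rw [Finset.sum_congr rfl (fun b _ => h0 b), Finset.sum_const, Finset.card_univ,
    Fintype.card_fin] at hsum
  have hx00 : x 0 = 0 := by
    have : ((n:ℝ)+1) * x 0 = 0 := by
      rw [nsmul_eq_mul] at hsum; push_cast at hsum; linarith [hsum]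
    have hn : ((n:ℝ)+1) ≠ 0 := by positivity
    exact (mul_eq_zero.1 this).resolve_left hn
  apply hx0
  funext a
  rw [hEq a, hx00]; rfl

open Polynomial in
open scoped Kronecker in
lemma lemD (n : ℕ) {V : Type} [Fintype V] [DecidableEq V] (M : Matrix V V ℝ) :
    (((X:ℝ[X]) ^ 2 • (1 : Matrix (Fin (n+1) × V) (Fin (n+1) × V) ℝ[X])) -
      (((fun _ _ => ((n:ℝ)+1)⁻¹) : Matrix (Fin (n+1)) (Fin (n+1)) ℝ) ⊗ₖ M).map C).det
    = X ^ (2 * n * Fintype.card V) *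
        (((X:ℝ[X]) ^ 2 • (1 : Matrix V V ℝ[X])) - M.map C).det := by
  classical
  set p := Fintype.card V
  set Q : Matrix (Fin (n+1)) (Fin (n+1)) ℝ := fun i j => if i = 0 then (1:ℝ) else
    if j = i then 1 else if j = 0 then -1 else 0 with hQ
  set J' : Matrix (Fin (n+1)) (Fin (n+1)) ℝ := fun _ _ => ((n:ℝ)+1)⁻¹ with hJ
  set E : Matrix (Fin (n+1)) (Fin (n+1)) ℝ := fun i j => if i = 0 ∧ j = 0 then (1:ℝ) else 0
    with hE
  have hQJ : Q * J' = E * Q := by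
    ext i j
    rw [Matrix.mul_apply, Matrix.mul_apply]
    have hL : ∑ a, Q i a * J' a j = (∑ a, Q i a) * ((n:ℝ)+1)⁻¹ := by
      rw [Finset.sum_mul]
    have hR : ∀ a : Fin (n+1), E i a * Q a j =
        (if a = 0 then (if i = 0 then Q a j else 0) else 0) := by
      intro a
      rw [hE]
      simp only
      by_cases h1 : i = 0 <;> by_cases h2 : a = 0 <;> simp [h1, h2]
    rw [hL, Finset.sum_congr rfl (fun a _ => hR a), Finset.sum_ite_eq' Finset.univ,
      if_pos (Finset.mem_univ _), rowsum_Q n i]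
    by_cases h1 : i = 0
    · rw [if_pos h1, if_pos h1, mul_inv_cancel₀ (by positivity), hQ]
      simp
    · rw [if_neg h1, if_neg h1, zero_mul]
  set Mc : Matrix V V ℝ[X] := M.map C with hMc
  set Qc : Matrix (Fin (n+1)) (Fin (n+1)) ℝ[X] := Q.map C with hQc
  have hmapkron : (J' ⊗ₖ M).map C = (J'.map C) ⊗ₖ Mc := by
    refine Matrix.ext fun x y => ?_
    simp only [Matrix.kroneckerMap_apply, Matrix.map_apply, _root_.map_mul, hMc]
  rw [hmapkron]
  set N : Matrix (Fin (n+1) × V) (Fin (n+1) × V) ℝ[X] :=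
    (X:ℝ[X])^2 • 1 - (J'.map C ⊗ₖ Mc) with hN
  set N' : Matrix (Fin (n+1) × V) (Fin (n+1) × V) ℝ[X] :=
    (X:ℝ[X])^2 • 1 - (E.map C ⊗ₖ Mc) with hN'def
  have hcomm : (Qc ⊗ₖ (1 : Matrix V V ℝ[X])) * N = N' * (Qc ⊗ₖ 1) := by
    rw [hN, hN'def, Matrix.mul_sub, Matrix.sub_mul]
    congr 1
    · rw [Matrix.mul_smul, Matrix.smul_mul, Matrix.mul_one, Matrix.one_mul]
    · rw [← Matrix.mul_kronecker_mul, ← Matrix.mul_kronecker_mul, Matrix.one_mul, Matrix.mul_one,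
        hQc, ← Matrix.map_mul, hQJ, Matrix.map_mul]
  have hdet := congrArg Matrix.det hcomm
  rw [Matrix.det_mul, Matrix.det_mul, mul_comm (N'.det)] at hdet
  have hQcdet : (Qc ⊗ₖ (1:Matrix V V ℝ[X])).det ≠ 0 := by
    rw [Matrix.det_kronecker, Matrix.det_one, one_pow, mul_one, hQc]
    have hdq : (Q.map (⇑(C : ℝ →+* ℝ[X]))).det = Polynomial.C Q.det := by
      rw [← RingHom.mapMatrix_apply, ← RingHom.map_det]
    rw [hdq]
    exact pow_ne_zero _ (Polynomial.C_ne_zero.mpr (detQ_ne n))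
  have hNN : N.det = N'.det := mul_left_cancel₀ hQcdet hdet
  set d : Fin (n+1) → Matrix V V ℝ[X] :=
    fun i => if i = 0 then (X:ℝ[X])^2 • 1 - Mc else (X:ℝ[X])^2 • 1 with hd
  have hblock : N' = (Matrix.blockDiagonal d).submatrix
      (Equiv.prodComm (Fin (n+1)) V) (Equiv.prodComm (Fin (n+1)) V) := by
    ext ⟨i,u⟩ ⟨j,v⟩ : 1
    simp only [hN'def, Matrix.sub_apply, Matrix.smul_apply, Matrix.one_apply,
      Matrix.kroneckerMap_apply, Matrix.map_apply, Matrix.submatrix_apply,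
      Equiv.prodComm_apply, Prod.swap_prod_mk, Matrix.blockDiagonal_apply, hE, hd,
      Prod.mk.injEq, smul_eq_mul]
    by_cases hij : i = j
    · subst hij
      by_cases h0 : i = 0 <;> by_cases huv : u = v <;>
        simp [h0, huv, Matrix.sub_apply, Matrix.smul_apply, Matrix.one_apply,
          Matrix.map_apply, smul_eq_mul, Matrix.map]
    · have hnot : ¬(i = 0 ∧ j = 0) := by
        rintro ⟨r1, r2⟩; exact hij (r1.trans r2.symm)
      simp [hij, hnot, fun h => hij h, Matrix.map]
  have hdetN' : N'.det = (((X:ℝ[X])^2 • (1:Matrix V V ℝ[X])) - Mc).det * (X ^ (2*p)) ^ n := by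
    rw [hblock, Matrix.det_submatrix_equiv_self, Matrix.det_blockDiagonal,
      ← Finset.mul_prod_erase Finset.univ _ (Finset.mem_univ (0 : Fin (n+1)))]
    have hval : ∀ i ∈ Finset.univ.erase (0 : Fin (n+1)), (d i).det = (X:ℝ[X]) ^ (2*p) := by
      intro i hi
      have hi0 : i ≠ 0 := Finset.ne_of_mem_erase hi
      rw [hd]
      simp only [if_neg hi0]
      rw [Matrix.det_smul, Matrix.det_one, mul_one, ← pow_mul]
    have h00 : (d 0).det = (((X:ℝ[X])^2 • (1:Matrix V V ℝ[X])) - Mc).det := by simp [hd]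
    rw [Finset.prod_congr rfl hval, Finset.prod_const,
      Finset.card_erase_of_mem (Finset.mem_univ _), Finset.card_univ, Fintype.card_fin,
      Nat.add_sub_cancel, h00]
  rw [hNN, hdetN', ← pow_mul]
  have hexp : 2*p*n = 2*n*p := by ring
  rw [hexp, mul_comm]

lemma sqrt_helper (k c a b : ℕ) (hk : 0 < k) (hc : 0 < c) (ha : 0 < a) (hb : 0 < b) :
    (k:ℝ) * (1 / Real.sqrt (((k * a) * c : ℕ)) * (1 / Real.sqrt (((k * b) * c : ℕ)))) =
      (1 / (c:ℝ)) * (1 / (Real.sqrt (a:ℕ) * Real.sqrt (b:ℕ))) := by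
  have hkc : (0:ℝ) < (k:ℝ) * c := by positivity
  have haR : (0:ℝ) < (a:ℝ) := by exact_mod_cast ha
  have hbR : (0:ℝ) < (b:ℝ) := by exact_mod_cast hb
  have h1 : Real.sqrt (((k*a)*c : ℕ):ℝ) = Real.sqrt ((k:ℝ)*c) * Real.sqrt (a:ℝ) := by
    push_cast
    rw [show (k:ℝ)*a*c = ((k:ℝ)*c)*a by ring, Real.sqrt_mul hkc.le]
  have h2 : Real.sqrt (((k*b)*c : ℕ):ℝ) = Real.sqrt ((k:ℝ)*c) * Real.sqrt (b:ℝ) := by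
    push_cast
    rw [show (k:ℝ)*b*c = ((k:ℝ)*c)*b by ring, Real.sqrt_mul hkc.le]
  have hsa : (0:ℝ) < Real.sqrt (a:ℝ) := Real.sqrt_pos.mpr haR
  have hsb : (0:ℝ) < Real.sqrt (b:ℝ) := Real.sqrt_pos.mpr hbR
  have hskc : (0:ℝ) < Real.sqrt ((k:ℝ)*c) := Real.sqrt_pos.mpr hkc
  have hss : Real.sqrt ((k:ℝ)*c) * Real.sqrt ((k:ℝ)*c) = (k:ℝ)*c :=
    Real.mul_self_sqrt hkc.le
  rw [h1, h2]
  have hk0 : (k:ℝ) ≠ 0 := by positivity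
  have hc0 : (c:ℝ) ≠ 0 := by positivity
  rw [div_mul_div_comm, one_mul,
    show Real.sqrt ((k:ℝ)*c) * Real.sqrt (a:ℝ) * (Real.sqrt ((k:ℝ)*c) * Real.sqrt (b:ℝ))
      = ((k:ℝ)*c) * (Real.sqrt (a:ℝ) * Real.sqrt (b:ℝ)) from by
        linear_combination (Real.sqrt (a:ℝ) * Real.sqrt (b:ℝ)) * hss]
  field_simp

lemma randic_symm {W : Type} (H : SimpleGraph W) (a b : W) :
    randicMatrix H a b = randicMatrix H b a := by
  simp only [randicMatrix]
  by_cases h : H.Adj a b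
  · rw [if_pos h, if_pos h.symm, Nat.mul_comm]
  · rw [if_neg h, if_neg (fun h' => h h'.symm)]

section GraphLemmas

variable {V : Type} [Fintype V] [DecidableEq V] (G : SimpleGraph V) [DecidableRel G.Adj]

lemma card_incidence_sub (u : V) :
    Nat.card {e : G.edgeSet // u ∈ (e : Sym2 V)} = G.degree u := by
  have e1 : {e : G.edgeSet // u ∈ (e : Sym2 V)} ≃ G.incidenceSet u :=
    { toFun := fun x => ⟨x.1.1, x.1.2, x.2⟩
      invFun := fun x => ⟨⟨x.1, x.2.1⟩, x.2.2⟩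
      left_inv := fun _ => rfl
      right_inv := fun _ => rfl }
  rw [Nat.card_congr e1, Nat.card_eq_fintype_card]
  exact G.card_incidenceSet_eq_degree u

lemma card_sym2_mem (e : G.edgeSet) :
    Nat.card {v : V | v ∈ (e : Sym2 V)} = 2 := by
  obtain ⟨e, he⟩ := e
  induction e using Sym2.ind with
  | _ a b =>
    have hab : a ≠ b := G.ne_of_adj (G.mem_edgeSet.mp he)
    have hset : {v : V | v ∈ (s(a,b) : Sym2 V)} = ({a, b} : Set V) := by
      ext v; simp [Sym2.mem_iff]
    rw [hset, Nat.card_coe_set_eq, Set.ncard_pair hab]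

lemma SGk_adj_iff (k : ℕ) (u : V) (ie : Fin k × G.edgeSet) :
    (SGkGraph G k).Adj (Sum.inl u) (Sum.inr ie) ↔ u ∈ (ie.2 : Sym2 V) := by
  constructor
  · rintro (⟨v, ie', h1, h2, h3⟩ | ⟨v, ie', h1, h2, h3⟩)
    · obtain rfl := Sum.inl.inj h1
      obtain rfl := Sum.inr.inj h2
      exact h3
    · exact absurd h1 (by simp)
  · exact fun h => Or.inl ⟨u, ie, rfl, rfl, h⟩

lemma SGk_nbhd_inl (k : ℕ) (u : V) :
    Nat.card ((SGkGraph G k).neighborSet (Sum.inl u)) = k * G.degree u := by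
  have hset : (SGkGraph G k).neighborSet (Sum.inl u) =
      Sum.inr '' {ie : Fin k × G.edgeSet | u ∈ (ie.2 : Sym2 V)} := by
    ext x
    constructor
    · rintro (⟨v, ie, h1, rfl, h3⟩ | ⟨v, ie, h1, h2, h3⟩)
      · exact ⟨ie, by rw [Sum.inl.inj h1]; exact h3, rfl⟩
      · exact absurd h1 (by simp)
    · rintro ⟨ie, hie, rfl⟩
      exact Or.inl ⟨u, ie, rfl, rfl, hie⟩
  rw [hset, Nat.card_coe_set_eq, Set.ncard_image_of_injective _ Sum.inr_injective,
    ← Nat.card_coe_set_eq]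
  have e2 : {ie : Fin k × G.edgeSet | u ∈ (ie.2 : Sym2 V)} ≃
      Fin k × {e : G.edgeSet // u ∈ (e : Sym2 V)} :=
    { toFun := fun x => (x.1.1, ⟨x.1.2, x.2⟩)
      invFun := fun y => ⟨(y.1, y.2.1), y.2.2⟩
      left_inv := fun _ => rfl
      right_inv := fun _ => rfl }
  rw [Nat.card_congr e2, Nat.card_prod, card_incidence_sub]
  congr 1
  rw [Nat.card_eq_fintype_card, Fintype.card_fin]

lemma SGk_nbhd_inr (k : ℕ) (ie : Fin k × G.edgeSet) :
    Nat.card ((SGkGraph G k).neighborSet (Sum.inr ie)) = 2 := by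
  have hset : (SGkGraph G k).neighborSet (Sum.inr ie) =
      Sum.inl '' {v : V | v ∈ (ie.2 : Sym2 V)} := by
    ext x
    constructor
    · rintro (⟨v, ie', h1, h2, h3⟩ | ⟨v, ie', h1, rfl, h3⟩)
      · exact absurd h1 (by simp)
      · obtain rfl := Sum.inr.inj h1
        exact ⟨v, h3, rfl⟩
    · rintro ⟨v, hv, rfl⟩
      exact Or.inr ⟨v, ie, rfl, rfl, hv⟩
  rw [hset, Nat.card_coe_set_eq, Set.ncard_image_of_injective _ Sum.inl_injective,
    ← Nat.card_coe_set_eq, card_sym2_mem]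

lemma SGtn_adj_iff (n t : ℕ) (iv : Fin (n+1) × V) (je : Fin (t+1) × G.edgeSet) :
    (SGtnGraph G n t).Adj (Sum.inl iv) (Sum.inr je) ↔ iv.2 ∈ (je.2 : Sym2 V) := by
  constructor
  · rintro (⟨iv', je', h1, h2, h3⟩ | ⟨iv', je', h1, h2, h3⟩)
    · obtain rfl := Sum.inl.inj h1
      obtain rfl := Sum.inr.inj h2
      exact h3
    · exact absurd h1 (by simp)
  · exact fun h => Or.inl ⟨iv, je, rfl, rfl, h⟩

lemma SGtn_nbhd_inl (n t : ℕ) (iv : Fin (n+1) × V) :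
    Nat.card ((SGtnGraph G n t).neighborSet (Sum.inl iv)) = (t+1) * G.degree iv.2 := by
  have hset : (SGtnGraph G n t).neighborSet (Sum.inl iv) =
      Sum.inr '' {je : Fin (t+1) × G.edgeSet | iv.2 ∈ (je.2 : Sym2 V)} := by
    ext x
    constructor
    · rintro (⟨iv', je, h1, rfl, h3⟩ | ⟨iv', je, h1, h2, h3⟩)
      · exact ⟨je, by rw [Sum.inl.inj h1]; exact h3, rfl⟩
      · exact absurd h1 (by simp)
    · rintro ⟨je, hje, rfl⟩
      exact Or.inl ⟨iv, je, rfl, rfl, hje⟩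
  rw [hset, Nat.card_coe_set_eq, Set.ncard_image_of_injective _ Sum.inr_injective,
    ← Nat.card_coe_set_eq]
  have e2 : {je : Fin (t+1) × G.edgeSet | iv.2 ∈ (je.2 : Sym2 V)} ≃
      Fin (t+1) × {e : G.edgeSet // iv.2 ∈ (e : Sym2 V)} :=
    { toFun := fun x => (x.1.1, ⟨x.1.2, x.2⟩)
      invFun := fun y => ⟨(y.1, y.2.1), y.2.2⟩
      left_inv := fun _ => rfl
      right_inv := fun _ => rfl }
  rw [Nat.card_congr e2, Nat.card_prod, card_incidence_sub]
  congr 1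
  rw [Nat.card_eq_fintype_card, Fintype.card_fin]

lemma SGtn_nbhd_inr (n t : ℕ) (je : Fin (t+1) × G.edgeSet) :
    Nat.card ((SGtnGraph G n t).neighborSet (Sum.inr je)) = (n+1) * 2 := by
  have hset : (SGtnGraph G n t).neighborSet (Sum.inr je) =
      Sum.inl '' {iv : Fin (n+1) × V | iv.2 ∈ (je.2 : Sym2 V)} := by
    ext x
    constructor
    · rintro (⟨iv, je', h1, h2, h3⟩ | ⟨iv, je', h1, rfl, h3⟩)
      · exact absurd h1 (by simp)
      · obtain rfl := Sum.inr.inj h1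
        exact ⟨iv, h3, rfl⟩
    · rintro ⟨iv, hiv, rfl⟩
      exact Or.inr ⟨iv, je, rfl, rfl, hiv⟩
  rw [hset, Nat.card_coe_set_eq, Set.ncard_image_of_injective _ Sum.inl_injective,
    ← Nat.card_coe_set_eq]
  have e2 : {iv : Fin (n+1) × V | iv.2 ∈ (je.2 : Sym2 V)} ≃
      Fin (n+1) × {v : V // v ∈ (je.2 : Sym2 V)} :=
    { toFun := fun x => (x.1.1, ⟨x.1.2, x.2⟩)
      invFun := fun y => ⟨(y.1, y.2.1), y.2.2⟩
      left_inv := fun _ => rfl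
      right_inv := fun _ => rfl }
  rw [Nat.card_congr e2, Nat.card_prod]
  congr 1
  · rw [Nat.card_eq_fintype_card, Fintype.card_fin]
  · exact card_sym2_mem G je.2

end GraphLemmas

/-- if `k·q = n·p + (t+1)·q` (so `S(G)_k` and `S(G)_t^n` have the same number
of vertices), then `S(G)_k` and `S(G)_t^n` are Randić cospectral. -/
theorem stmt_11 (V : Type) [Fintype V] [DecidableEq V] (G : SimpleGraph V) [DecidableRel G.Adj]
    (hiso : NoIsolated G) (n t k : ℕ) (hn : 1 ≤ n) (ht : t = n ∨ t = n - 1) (hk : 0 < k)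
    (horder : k * Fintype.card G.edgeSet =
      n * Fintype.card V + (t + 1) * Fintype.card G.edgeSet) :
    (randicMatrix (SGkGraph G k)).charpoly = (randicMatrix (SGtnGraph G n t)).charpoly := by
  classical
  have hdeg : ∀ u : V, 0 < G.degree u := by
    intro u
    obtain ⟨w, hw⟩ := hiso u
    exact (G.degree_pos_iff_exists_adj u).mpr ⟨w, hw⟩
  set s : V → V → ℝ := fun u v => ∑ e : G.edgeSet,
    (if u ∈ (e : Sym2 V) then (1:ℝ) else 0) * (if v ∈ (e : Sym2 V) then (1:ℝ) else 0) with hs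
  set B1 : Matrix V (Fin k × G.edgeSet) ℝ :=
    fun u ie => randicMatrix (SGkGraph G k) (Sum.inl u) (Sum.inr ie) with hB1
  set B2 : Matrix (Fin (n+1) × V) (Fin (t+1) × G.edgeSet) ℝ :=
    fun iv je => randicMatrix (SGtnGraph G n t) (Sum.inl iv) (Sum.inr je) with hB2
  have hB1val : ∀ (u : V) (ie : Fin k × G.edgeSet),
      B1 u ie = if u ∈ (ie.2 : Sym2 V) then
        1 / Real.sqrt (((k * G.degree u) * 2 : ℕ)) else 0 := by
    intro u ie
    show randicMatrix (SGkGraph G k) (Sum.inl u) (Sum.inr ie) = _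
    simp only [randicMatrix]
    rw [SGk_nbhd_inl G k u, SGk_nbhd_inr G k ie]
    by_cases h : u ∈ (ie.2 : Sym2 V)
    · rw [if_pos ((SGk_adj_iff G k u ie).mpr h), if_pos h]
    · rw [if_neg (fun ha => h ((SGk_adj_iff G k u ie).mp ha)), if_neg h]
  have hB2val : ∀ (iv : Fin (n+1) × V) (je : Fin (t+1) × G.edgeSet),
      B2 iv je = if iv.2 ∈ (je.2 : Sym2 V) then
        1 / Real.sqrt ((((t+1) * G.degree iv.2) * ((n+1) * 2) : ℕ)) else 0 := by
    intro iv je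
    show randicMatrix (SGtnGraph G n t) (Sum.inl iv) (Sum.inr je) = _
    simp only [randicMatrix]
    rw [SGtn_nbhd_inl G n t iv, SGtn_nbhd_inr G n t je]
    by_cases h : iv.2 ∈ (je.2 : Sym2 V)
    · rw [if_pos ((SGtn_adj_iff G n t iv je).mpr h), if_pos h]
    · rw [if_neg (fun ha => h ((SGtn_adj_iff G n t iv je).mp ha)), if_neg h]
  have hprod1 : ∀ u v : V, (B1 * B1ᵀ) u v =
      (1/(2:ℝ)) * (1 / (Real.sqrt (G.degree u) * Real.sqrt (G.degree v))) * s u v := by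
    intro u v
    rw [Matrix.mul_apply]
    simp only [Matrix.transpose_apply]
    have step1 : ∀ ie : Fin k × G.edgeSet, B1 u ie * B1 v ie =
        ((if u ∈ (ie.2 : Sym2 V) then (1:ℝ) else 0) *
          (if v ∈ (ie.2 : Sym2 V) then (1:ℝ) else 0)) *
        ((1 / Real.sqrt (((k * G.degree u) * 2 : ℕ))) *
          (1 / Real.sqrt (((k * G.degree v) * 2 : ℕ)))) := by
      intro ie
      rw [hB1val u ie, hB1val v ie]
      split_ifs <;> ring
    rw [Finset.sum_congr rfl (fun ie _ => step1 ie)]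
    rw [Fintype.sum_prod_type]
    dsimp only
    rw [Finset.sum_const (b := ∑ y : G.edgeSet,
      ((if u ∈ (y : Sym2 V) then (1:ℝ) else 0) * (if v ∈ (y : Sym2 V) then (1:ℝ) else 0)) *
        ((1 / Real.sqrt (((k * G.degree u) * 2 : ℕ))) * (1 / Real.sqrt (((k * G.degree v) * 2 : ℕ))))),
      Finset.card_univ, Fintype.card_fin, nsmul_eq_mul]
    rw [← Finset.sum_mul]
    have hAB := sqrt_helper k 2 (G.degree u) (G.degree v) hk (by norm_num) (hdeg u) (hdeg v)
    rw [hs]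
    simp only
    push_cast at hAB ⊢
    linear_combination (∑ e : G.edgeSet,
      (if u ∈ (e : Sym2 V) then (1:ℝ) else 0) * (if v ∈ (e : Sym2 V) then (1:ℝ) else 0)) * hAB
  have hprod2 : ∀ x y : Fin (n+1) × V, (B2 * B2ᵀ) x y =
      (1/(((n+1) * 2 : ℕ):ℝ)) *
        (1 / (Real.sqrt (G.degree x.2) * Real.sqrt (G.degree y.2))) * s x.2 y.2 := by
    intro x y
    rw [Matrix.mul_apply]
    simp only [Matrix.transpose_apply]
    have step1 : ∀ je : Fin (t+1) × G.edgeSet, B2 x je * B2 y je =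
        ((if x.2 ∈ (je.2 : Sym2 V) then (1:ℝ) else 0) *
          (if y.2 ∈ (je.2 : Sym2 V) then (1:ℝ) else 0)) *
        ((1 / Real.sqrt ((((t+1) * G.degree x.2) * ((n+1) * 2) : ℕ))) *
          (1 / Real.sqrt ((((t+1) * G.degree y.2) * ((n+1) * 2) : ℕ)))) := by
      intro je
      rw [hB2val x je, hB2val y je]
      split_ifs <;> ring
    rw [Finset.sum_congr rfl (fun je _ => step1 je)]
    rw [Fintype.sum_prod_type]
    dsimp only
    rw [Finset.sum_const (b := ∑ y_1 : G.edgeSet,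
      ((if x.2 ∈ (y_1 : Sym2 V) then (1:ℝ) else 0) * (if y.2 ∈ (y_1 : Sym2 V) then (1:ℝ) else 0)) *
        ((1 / Real.sqrt ((((t+1) * G.degree x.2) * ((n+1) * 2) : ℕ))) *
          (1 / Real.sqrt ((((t+1) * G.degree y.2) * ((n+1) * 2) : ℕ))))),
      Finset.card_univ, Fintype.card_fin, nsmul_eq_mul]
    rw [← Finset.sum_mul]
    have hAB := sqrt_helper (t+1) ((n+1)*2) (G.degree x.2) (G.degree y.2)
      (Nat.succ_pos t) (by positivity) (hdeg x.2) (hdeg y.2)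
    rw [hs]
    simp only
    push_cast at hAB ⊢
    linear_combination (∑ e : G.edgeSet,
      (if x.2 ∈ (e : Sym2 V) then (1:ℝ) else 0) * (if y.2 ∈ (e : Sym2 V) then (1:ℝ) else 0)) * hAB
  have hkron : B2 * B2ᵀ =
      Matrix.kroneckerMap (· * ·)
        ((fun _ _ => ((n:ℝ)+1)⁻¹) : Matrix (Fin (n+1)) (Fin (n+1)) ℝ) (B1 * B1ᵀ) := by
    refine Matrix.ext fun x y => ?_
    show (B2 * B2ᵀ) x y = ((n:ℝ)+1)⁻¹ * (B1 * B1ᵀ) x.2 y.2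
    rw [hprod2 x y, hprod1 x.2 y.2]
    have hn0 : ((n:ℝ)+1) ≠ 0 := by positivity
    push_cast
    field_simp
  have hnadj1 : ∀ x y : V, ¬ (SGkGraph G k).Adj (Sum.inl x) (Sum.inl y) := by
    rintro x y (⟨v, ie, h1, h2, h3⟩ | ⟨v, ie, h1, h2, h3⟩)
    · exact absurd h2 (by simp)
    · exact absurd h1 (by simp)
  have hnadj2 : ∀ x y : Fin k × G.edgeSet,
      ¬ (SGkGraph G k).Adj (Sum.inr x) (Sum.inr y) := by
    rintro x y (⟨v, ie, h1, h2, h3⟩ | ⟨v, ie, h1, h2, h3⟩)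
    · exact absurd h1 (by simp)
    · exact absurd h2 (by simp)
  have hnadj3 : ∀ x y : Fin (n+1) × V,
      ¬ (SGtnGraph G n t).Adj (Sum.inl x) (Sum.inl y) := by
    rintro x y (⟨iv, je, h1, h2, h3⟩ | ⟨iv, je, h1, h2, h3⟩)
    · exact absurd h2 (by simp)
    · exact absurd h1 (by simp)
  have hnadj4 : ∀ x y : Fin (t+1) × G.edgeSet,
      ¬ (SGtnGraph G n t).Adj (Sum.inr x) (Sum.inr y) := by
    rintro x y (⟨iv, je, h1, h2, h3⟩ | ⟨iv, je, h1, h2, h3⟩)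
    · exact absurd h1 (by simp)
    · exact absurd h2 (by simp)
  have hRk : randicMatrix (SGkGraph G k) = Matrix.fromBlocks 0 B1 B1ᵀ 0 := by
    refine Matrix.ext fun x y => ?_
    rcases x with u | ie <;> rcases y with v | je
    · simp only [Matrix.fromBlocks_apply₁₁, Matrix.zero_apply, randicMatrix]
      rw [if_neg (hnadj1 u v)]
    · rfl
    · simp only [Matrix.fromBlocks_apply₂₁, Matrix.transpose_apply]
      exact randic_symm _ _ _
    · simp only [Matrix.fromBlocks_apply₂₂, Matrix.zero_apply, randicMatrix]
      rw [if_neg (hnadj2 ie je)]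
  have hRtn : randicMatrix (SGtnGraph G n t) = Matrix.fromBlocks 0 B2 B2ᵀ 0 := by
    refine Matrix.ext fun x y => ?_
    rcases x with iv | je <;> rcases y with iv' | je'
    · simp only [Matrix.fromBlocks_apply₁₁, Matrix.zero_apply, randicMatrix]
      rw [if_neg (hnadj3 iv iv')]
    · rfl
    · simp only [Matrix.fromBlocks_apply₂₁, Matrix.transpose_apply]
      exact randic_symm _ _ _
    · simp only [Matrix.fromBlocks_apply₂₂, Matrix.zero_apply, randicMatrix]
      rw [if_neg (hnadj4 je je')]
  have e1 := lemA B1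
  have e2 := lemA B2
  have hc1 : Fintype.card (Fin k × G.edgeSet) = k * Fintype.card G.edgeSet := by
    rw [Fintype.card_prod, Fintype.card_fin]
  have hc2 : Fintype.card (Fin (n+1) × V) = (n+1) * Fintype.card V := by
    rw [Fintype.card_prod, Fintype.card_fin]
  have hc3 : Fintype.card (Fin (t+1) × G.edgeSet) = (t+1) * Fintype.card G.edgeSet := by
    rw [Fintype.card_prod, Fintype.card_fin]
  rw [hc1] at e1
  rw [hc2, hc3, hkron, lemD n (B1 * B1ᵀ)] at e2
  rw [hRk, hRtn]
  set p := Fintype.card V with hp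
  set q := Fintype.card G.edgeSet with hq
  set D : Polynomial ℝ := (((Polynomial.X : Polynomial ℝ) ^ 2 •
    (1 : Matrix V V (Polynomial ℝ))) - (B1 * B1ᵀ).map Polynomial.C).det with hD
  have hE : p + ((t+1) * q + 2*n*p) = (n+1) * p + k * q := by
    rw [horder]
    ring
  refine mul_right_cancel₀ (b := (Polynomial.X : Polynomial ℝ) ^ ((n+1) * p + k * q))
    (pow_ne_zero _ Polynomial.X_ne_zero) ?_
  calc (Matrix.fromBlocks 0 B1 B1ᵀ 0).charpoly * Polynomial.X ^ ((n+1) * p + k * q)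
      = ((Matrix.fromBlocks 0 B1 B1ᵀ 0).charpoly * Polynomial.X ^ p) *
          Polynomial.X ^ ((t+1) * q + 2*n*p) := by
        rw [mul_assoc, ← pow_add, hE]
    _ = (Polynomial.X ^ (k * q) * D) * Polynomial.X ^ ((t+1) * q + 2*n*p) := by rw [e1]
    _ = (Polynomial.X ^ ((t+1) * q) * (Polynomial.X ^ (2*n*p) * D)) *
          Polynomial.X ^ (k * q) := by ring
    _ = ((Matrix.fromBlocks 0 B2 B2ᵀ 0).charpoly * Polynomial.X ^ ((n+1) * p)) *
          Polynomial.X ^ (k * q) := by rw [e2]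
    _ = (Matrix.fromBlocks 0 B2 B2ᵀ 0).charpoly * Polynomial.X ^ ((n+1) * p + k * q) := by
        rw [mul_assoc, ← pow_add]


end
end
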